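/- arXiv:2102.10300 — 13 statements merged into one kernel-verified Lean document; each statement's English description precedes it below -/
import Mathlib

section
/- Let R be a commutative ring, M an R-module, and N a proper submodule of M. The following are equivalent: (1) N is a quasi J-submodule of M; (2) for every r ∈ R with r ∉ (J(R)M : M) and every submodule K of M with rK ⊆ N, one has K ⊆ M-rad(N); (3) for every ideal A of R with A ⊄ (J(R)M : M) and every submodule K of M with AK ⊆ N, one has K ⊆ M-rad(N). -/
open Submodule Pointwise

/-- The ideal `(J(R)M : M)` where `J(R)` is the Jacobson radical of `R`. -/
def jacobsonColon (R M : Type*) [CommRing R] [AddCommGroup M] [Module R M] : Ideal R :=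
  ((⊥ : Ideal R).jacobson • (⊤ : Submodule R M)).colon ⊤

/-- A prime submodule: a proper submodule `N` such that whenever `r • m ∈ N`,
either `m ∈ N` or `r • M ⊆ N`. -/
def IsPrimeSubmodule {R M : Type*} [CommRing R] [AddCommGroup M] [Module R M]
    (N : Submodule R M) : Prop :=
  N ≠ ⊤ ∧ ∀ (r : R) (m : M), r • m ∈ N → m ∈ N ∨ r ∈ N.colon ⊤

/-- `M`-rad(N): the intersection of all prime submodules of `M` containing `N`
(equal to `⊤` if there are none). -/
def Mrad {R M : Type*} [CommRing R] [AddCommGroup M] [Module R M]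
    (N : Submodule R M) : Submodule R M :=
  sInf {P : Submodule R M | IsPrimeSubmodule P ∧ N ≤ P}

/-- A quasi `J`-submodule. -/
def IsQuasiJSubmodule {R M : Type*} [CommRing R] [AddCommGroup M] [Module R M]
    (N : Submodule R M) : Prop :=
  N ≠ ⊤ ∧ ∀ (r : R) (m : M), r • m ∈ N → r ∉ jacobsonColon R M → m ∈ Mrad N

theorem smul_mem_of_mem_span_singleton {R M : Type*} [CommRing R] [AddCommGroup M] [Module R M]
    {N : Submodule R M} {r a : R} {m k : M} (hrm : r • m ∈ N) (ha : a ∈ Ideal.span {r})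
    (hk : k ∈ span R {m}) : a • k ∈ N := by
  have hak : a • k ∈ Ideal.span {r} • span R {m} := smul_mem_smul ha hk
  rw [span_smul_span, Set.singleton_smul_singleton] at hak
  exact (span_singleton_le_iff_mem _ _).mpr hrm hak

theorem stmt0 {R M : Type*} [CommRing R] [AddCommGroup M] [Module R M]
    (N : Submodule R M) (hN : N ≠ ⊤) :
    List.TFAE [IsQuasiJSubmodule N,
      ∀ r : R, r ∉ jacobsonColon R M → ∀ K : Submodule R M,
        (∀ k ∈ K, r • k ∈ N) → K ≤ Mrad N,
      ∀ A : Ideal R, ¬ A ≤ jacobsonColon R M → ∀ K : Submodule R M,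
        (∀ a ∈ A, ∀ k ∈ K, a • k ∈ N) → K ≤ Mrad N] := by
  tfae_have 1 → 2 := fun ⟨_, h⟩ r hr K hK k hk ↦ h r k (hK k hk) hr
  tfae_have 2 → 3 := by
    intro h A hA K hK
    obtain ⟨a, haA, ha⟩ := SetLike.not_le_iff_exists.mp hA
    exact h a ha K (hK a haA)
  tfae_have 3 → 1 := by
    refine fun h ↦ ⟨hN, fun r m hrm hr ↦ ?_⟩
    have hspan : ¬ Ideal.span {r} ≤ jacobsonColon R M :=
      fun hle ↦ hr (hle (Ideal.mem_span_singleton_self r))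
    exact h _ hspan (span R {m}) (fun a ha k hk ↦ smul_mem_of_mem_span_singleton hrm ha hk)
      (mem_span_singleton_self m)
  tfae_finish
end

section
/- Let φ : M₁ → M₂ be a surjective homomorphism of R-modules. If N is a quasi J-submodule of M₁ with ker(φ) ⊆ N, then φ(N) is a quasi J-submodule of M₂. -/
open Submodule Pointwise

/-! Since `ker φ ⊆ N`, `N` is the full preimage of `φ(N)`, so `r • m ∈ φ(N)` lifts to `N`. Surjectivity
makes `(J(R)M : M)` grow along `φ` and makes preimages of prime submodules prime, hence
`φ(M-rad N) ⊆ M-rad(φ N)`. -/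

namespace Submodule

variable {R M₁ M₂ : Type*} [Semiring R] [AddCommMonoid M₁] [Module R M₁]
  [AddCommMonoid M₂] [Module R M₂] {φ : M₁ →ₗ[R] M₂}

theorem colon_top_le_comap_colon_top (P : Submodule R M₂) :
    P.colon ⊤ ≤ (P.comap φ).colon ⊤ :=
  fun r hr => mem_colon.2 fun x _ => by
    simpa only [mem_comap, map_smul] using mem_colon.1 hr (φ x) trivial

theorem colon_top_le_map_colon_top (hφ : Function.Surjective φ)
    (N : Submodule R M₁) : N.colon ⊤ ≤ (N.map φ).colon ⊤ := by
  intro r hr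
  refine mem_colon.2 fun y _ => ?_
  obtain ⟨x, rfl⟩ := hφ y
  simpa using mem_map_of_mem (f := φ) (mem_colon.1 hr x trivial)

end Submodule

section

variable {R M₁ M₂ : Type*} [CommRing R] [AddCommGroup M₁] [Module R M₁]
  [AddCommGroup M₂] [Module R M₂] {φ : M₁ →ₗ[R] M₂}

theorem jacobsonColon_le_of_surjective (hφ : Function.Surjective φ) :
    jacobsonColon R M₁ ≤ jacobsonColon R M₂ := by
  have hmap : ((⊥ : Ideal R).jacobson • (⊤ : Submodule R M₁)).map φ =
      (⊥ : Ideal R).jacobson • (⊤ : Submodule R M₂) := by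
    rw [map_smul'', Submodule.map_top, LinearMap.range_eq_top.2 hφ]
  rw [jacobsonColon, jacobsonColon, ← hmap]
  exact colon_top_le_map_colon_top hφ _

theorem IsPrimeSubmodule.comap (hφ : Function.Surjective φ) {P : Submodule R M₂}
    (hP : IsPrimeSubmodule P) : IsPrimeSubmodule (P.comap φ) := by
  refine ⟨fun h => hP.1 (comap_injective_of_surjective hφ (h.trans (comap_top φ).symm)), ?_⟩
  intro r x hrx
  rw [mem_comap, map_smul] at hrx
  exact (hP.2 r (φ x) hrx).imp id fun hr => colon_top_le_comap_colon_top P hr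

theorem map_Mrad_le (hφ : Function.Surjective φ) (N : Submodule R M₁) :
    (Mrad N).map φ ≤ Mrad (N.map φ) := by
  refine le_sInf fun P ⟨hP, hNP⟩ => map_le_iff_le_comap.2 (sInf_le ⟨hP.comap hφ, ?_⟩)
  exact map_le_iff_le_comap.1 hNP

end

theorem stmt1 {R M₁ M₂ : Type*} [CommRing R] [AddCommGroup M₁] [Module R M₁]
    [AddCommGroup M₂] [Module R M₂] (φ : M₁ →ₗ[R] M₂) (hφ : Function.Surjective φ)
    (N : Submodule R M₁) (hN : IsQuasiJSubmodule N) (hker : LinearMap.ker φ ≤ N) :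
    IsQuasiJSubmodule (N.map φ) := by
  have hcomap : (N.map φ).comap φ = N := comap_map_eq_self hker
  refine ⟨fun h => hN.1 (by rw [← hcomap, h, comap_top]), ?_⟩
  intro r m hrm hrJ
  obtain ⟨x, rfl⟩ := hφ m
  have hrx : r • x ∈ N := by rwa [← hcomap, mem_comap, map_smul]
  exact map_Mrad_le hφ N <|
    mem_map_of_mem (hN.2 r x hrx fun hr => hrJ (jacobsonColon_le_of_surjective hφ hr))
end

section
/- Let φ : M₁ → M₂ be a surjective homomorphism of R-modules. If K is a quasi J-submodule of M₂ and ker(φ) ⊆ J(R)M₁, then φ⁻¹(K) is a quasi J-submodule of M₁. -/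
open Submodule Pointwise

section Surjective

variable {R M₁ M₂ : Type*} [CommRing R] [AddCommGroup M₁] [Module R M₁]
  [AddCommGroup M₂] [Module R M₂] {φ : M₁ →ₗ[R] M₂}

theorem Submodule.comap_ne_top_of_surjective (hφ : Function.Surjective φ) {K : Submodule R M₂}
    (hK : K ≠ ⊤) : K.comap φ ≠ ⊤ := by
  intro h
  apply hK
  rw [← map_comap_eq_of_surjective hφ K, h, map_top, LinearMap.range_eq_top.mpr hφ]

theorem Submodule.comap_colon_univ_of_surjective (hφ : Function.Surjective φ)
    (K : Submodule R M₂) : (K.comap φ).colon ⊤ = K.colon ⊤ := by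
  ext r
  simp only [mem_colon]
  constructor
  · intro h y _
    obtain ⟨m, rfl⟩ := hφ y
    simpa using h m trivial
  · intro h m _
    simpa using h (φ m) trivial

/-- `I M₂` is the image of `I M₁`, and it pulls back to `I M₁` because the kernel lies in it. -/
theorem Submodule.smul_top_colon_eq_of_surjective (hφ : Function.Surjective φ) (I : Ideal R)
    (hker : LinearMap.ker φ ≤ I • (⊤ : Submodule R M₁)) :
    (I • (⊤ : Submodule R M₂)).colon ⊤ = (I • (⊤ : Submodule R M₁)).colon ⊤ := by
  have himage : I • (⊤ : Submodule R M₂) = (I • (⊤ : Submodule R M₁)).map φ := by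
    rw [map_smul'', map_top, LinearMap.range_eq_top.mpr hφ]
  rw [himage, ← comap_colon_univ_of_surjective hφ, comap_map_eq_self hker]

theorem IsPrimeSubmodule.of_comap (hφ : Function.Surjective φ) {K : Submodule R M₂}
    (hK : IsPrimeSubmodule (K.comap φ)) : IsPrimeSubmodule K := by
  refine ⟨fun h => hK.1 (by rw [h, comap_top]), fun r y hry => ?_⟩
  obtain ⟨m, rfl⟩ := hφ y
  rw [← comap_colon_univ_of_surjective hφ]
  exact hK.2 r m (by simpa using hry)

/-- A prime submodule `P` containing `φ⁻¹(K)` contains `ker φ`, so `φ(P)` is a prime submodule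
containing `K` whose preimage is `P`. -/
theorem comap_Mrad_le_Mrad_comap (hφ : Function.Surjective φ) (K : Submodule R M₂) :
    (Mrad K).comap φ ≤ Mrad (K.comap φ) := by
  intro m hm
  rw [Mrad, mem_sInf]
  rintro P ⟨hP, hKP⟩
  have hPcomap : (P.map φ).comap φ = P := comap_map_eq_self ((LinearMap.ker_le_comap φ).trans hKP)
  have hK : K ≤ P.map φ := map_comap_eq_of_surjective hφ K ▸ map_mono hKP
  have himage : φ m ∈ P.map φ := mem_sInf.1 hm _ ⟨(hPcomap ▸ hP).of_comap hφ, hK⟩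
  rwa [← hPcomap]

end Surjective

theorem stmt2 {R M₁ M₂ : Type*} [CommRing R] [AddCommGroup M₁] [Module R M₁]
    [AddCommGroup M₂] [Module R M₂] (φ : M₁ →ₗ[R] M₂) (hφ : Function.Surjective φ)
    (K : Submodule R M₂) (hK : IsQuasiJSubmodule K)
    (hker : LinearMap.ker φ ≤ (⊥ : Ideal R).jacobson • (⊤ : Submodule R M₁)) :
    IsQuasiJSubmodule (K.comap φ) := by
  have hcolon : jacobsonColon R M₂ = jacobsonColon R M₁ :=
    smul_top_colon_eq_of_surjective hφ _ hker
  refine ⟨comap_ne_top_of_surjective hφ hK.1, fun r m hrm hr => ?_⟩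
  exact comap_Mrad_le_Mrad_comap hφ K (hK.2 r (φ m) (by simpa using hrm) (hcolon ▸ hr))
end

section
/- Let N and L be submodules of an R-module M with L ⊆ N. If N is a quasi J-submodule of M, then N/L is a quasi J-submodule of the quotient module M/L. -/
open Submodule Pointwise

/-
The argument works for any surjection `f : M → M'` with kernel inside `N`, the quotient map
`M → M/L` being one. Pulling back along `f` preserves prime submodules and the colon
`(P : M)`, so `f` maps `M`-rad(N) into `M'`-rad(f N), and `r ∉ (J(R)M' : M')` forces
`r ∉ (J(R)M : M)`. Since `f⁻¹(f N) = N`, the quasi `J` condition for `f N` reduces to the one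
for `N`.
-/
section Surjective

variable {R M M' : Type*} [CommRing R] [AddCommGroup M] [Module R M]
  [AddCommGroup M'] [Module R M'] {f : M →ₗ[R] M'}

theorem colon_top_comap_of_surjective (hf : Function.Surjective f) (P : Submodule R M') :
    (P.comap f).colon ⊤ = P.colon ⊤ := by
  ext r
  simp only [mem_colon, Set.top_eq_univ, Set.mem_univ, forall_const, mem_comap, map_smul]
  exact (hf.forall (p := fun y => r • y ∈ P)).symm

theorem isPrimeSubmodule_comap_of_surjective (hf : Function.Surjective f)
    {P : Submodule R M'} (hP : IsPrimeSubmodule P) : IsPrimeSubmodule (P.comap f) := by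
  obtain ⟨hPne, hPprime⟩ := hP
  refine ⟨fun htop => hPne ?_, fun r m hrm => ?_⟩
  · rw [← map_comap_eq_of_surjective hf P, htop, Submodule.map_top,
      LinearMap.range_eq_top.mpr hf]
  · rw [colon_top_comap_of_surjective hf]
    exact hPprime r (f m) (by simpa using hrm)

theorem map_mrad_le_of_surjective (hf : Function.Surjective f) (N : Submodule R M) :
    (Mrad N).map f ≤ Mrad (N.map f) := by
  rintro _ ⟨m, hm, rfl⟩
  refine mem_sInf.mpr fun P ⟨hP, hNP⟩ => ?_
  exact mem_sInf.mp hm (P.comap f)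
    ⟨isPrimeSubmodule_comap_of_surjective hf hP, map_le_iff_le_comap.mp hNP⟩

theorem colon_smul_top_le_of_surjective (hf : Function.Surjective f) (I : Ideal R) :
    (I • (⊤ : Submodule R M)).colon ⊤ ≤ (I • (⊤ : Submodule R M')).colon ⊤ := by
  have hle : I • (⊤ : Submodule R M) ≤ (I • (⊤ : Submodule R M')).comap f := by
    rw [← map_le_iff_le_comap, map_smul'', Submodule.map_top, LinearMap.range_eq_top.mpr hf]
  exact (colon_mono hle le_rfl).trans (colon_top_comap_of_surjective hf _).le

theorem jacobsonColon_le_of_surjective_s3 (hf : Function.Surjective f) :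
    jacobsonColon R M ≤ jacobsonColon R M' :=
  colon_smul_top_le_of_surjective hf _

theorem IsQuasiJSubmodule.map_of_surjective (hf : Function.Surjective f) {N : Submodule R M}
    (hN : IsQuasiJSubmodule N) (hker : LinearMap.ker f ≤ N) : IsQuasiJSubmodule (N.map f) := by
  obtain ⟨hNne, hNquasi⟩ := hN
  have hpullback : (N.map f).comap f = N := comap_map_eq_self hker
  refine ⟨fun htop => hNne ?_, fun r m' hrm hr => ?_⟩
  · rw [← hpullback, htop, comap_top]
  · obtain ⟨m, rfl⟩ := hf m'
    have hrmN : r • m ∈ N := by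
      rw [← hpullback, mem_comap, map_smul]
      exact hrm
    have hm := hNquasi r m hrmN fun hJ => hr (jacobsonColon_le_of_surjective_s3 hf hJ)
    exact map_mrad_le_of_surjective hf N (mem_map_of_mem hm)

end Surjective

theorem stmt3 {R M : Type*} [CommRing R] [AddCommGroup M] [Module R M]
    (N L : Submodule R M) (hLN : L ≤ N) (hN : IsQuasiJSubmodule N) :
    IsQuasiJSubmodule (N.map L.mkQ) :=
  hN.map_of_surjective L.mkQ_surjective (by rwa [ker_mkQ])
end

section
/- Let S be a multiplicatively closed subset of a commutative ring R such that S⁻¹(J(R)) = J(S⁻¹R), and let M be an R-module. If N is a quasi J-submodule of M and S⁻¹N ≠ S⁻¹M, then S⁻¹N is a quasi J-submodule of the S⁻¹R-module S⁻¹M. -/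
open Submodule Pointwise

/-!
Write `x = r/s` and `y = m/t`. If `x • y ∈ S⁻¹N`, then `(c r) • m ∈ N` for some `c ∈ S`.
If `c r ∈ (J(R)M : M)`, the hypothesis `S⁻¹J(R) = J(S⁻¹R)` puts `x` in
`(J(S⁻¹R)S⁻¹M : S⁻¹M)`. Otherwise `m ∈ M-rad(N)`, and `S⁻¹(M-rad N) ⊆ M-rad(S⁻¹N)` because a
prime submodule of `S⁻¹M` contracts to a prime submodule of `M`.
-/

section Localization

variable {R M A M' : Type*} [CommRing R] [AddCommGroup M] [Module R M]
  [CommRing A] [Algebra R A] [AddCommGroup M'] [Module R M'] [Module A M'] [IsScalarTower R A M']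

lemma IsPrimeSubmodule.comap_restrictScalars (S : Submonoid R) [IsLocalization S A]
    (f : M →ₗ[R] M') [IsLocalizedModule S f]
    {P : Submodule A M'} (hP : IsPrimeSubmodule P) :
    IsPrimeSubmodule ((P.restrictScalars R).comap f) := by
  refine ⟨fun h ↦ hP.1 ?_, fun r m hrm ↦ ?_⟩
  · rw [← (localized'gi A S f).l_u_eq P, h, localized'_top]
  · have hrm' : algebraMap R A r • f m ∈ P := by rwa [algebraMap_smul, ← map_smul]
    refine (hP.2 _ _ hrm').imp id fun hr ↦ mem_colon.2 fun m' _ ↦ ?_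
    change f (r • m') ∈ P
    rw [map_smul, ← algebraMap_smul A]
    exact mem_colon.1 hr _ trivial

lemma localized'_Mrad_le {S : Submonoid R} [IsLocalization S A]
    (f : M →ₗ[R] M') [IsLocalizedModule S f] (N : Submodule R M) :
    (Mrad N).localized' A S f ≤ Mrad (N.localized' A S f) := by
  have gc := (localized'gi A S f).gc
  exact le_sInf fun P ⟨hP, hNP⟩ ↦
    (gc _ _).2 (sInf_le ⟨hP.comap_restrictScalars S f, (gc _ _).1 hNP⟩)

lemma map_colon_top_le_colon_localized' {S : Submonoid R} [IsLocalization S A]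
    (f : M →ₗ[R] M') [IsLocalizedModule S f]
    (N : Submodule R M) :
    (N.colon ⊤).map (algebraMap R A) ≤ (N.localized' A S f).colon ⊤ := by
  refine Ideal.map_le_iff_le_comap.2 fun r hr ↦ mem_colon.2 fun z _ ↦ ?_
  obtain ⟨⟨m, s⟩, rfl⟩ := IsLocalizedModule.mk'_surjective S f z
  refine ⟨r • m, mem_colon.1 hr m trivial, s, ?_⟩
  rw [IsLocalizedModule.mk'_smul, Function.uncurry_apply_pair, algebraMap_smul]

lemma map_jacobsonColon_le (S : Submonoid R) [IsLocalization S A]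
    (f : M →ₗ[R] M') [IsLocalizedModule S f]
    (hJ : ((⊥ : Ideal R).jacobson).map (algebraMap R A) = (⊥ : Ideal A).jacobson) :
    (jacobsonColon R M).map (algebraMap R A) ≤ jacobsonColon A M' := by
  have h := map_colon_top_le_colon_localized' (A := A) (S := S) f
    ((⊥ : Ideal R).jacobson • (⊤ : Submodule R M))
  rwa [localized'_smul, Ideal.localized'_eq_map, localized'_top, hJ] at h

lemma exists_smul_mem_of_mk'_mem_localized' {S : Submonoid R} [IsLocalization S A]
    (f : M →ₗ[R] M') [IsLocalizedModule S f]
    {N : Submodule R M} {m : M} {t : S}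
    (h : IsLocalizedModule.mk' f m t ∈ N.localized' A S f) : ∃ c : S, c • m ∈ N := by
  obtain ⟨n, hn, u, hnu⟩ := h
  obtain ⟨c, hc⟩ := (IsLocalizedModule.mk'_eq_mk'_iff f n m u t).1 hnu
  exact ⟨c * u, by rw [mul_smul, hc]; exact N.smul_mem _ (N.smul_mem _ hn)⟩

end Localization

theorem stmt6 {R M : Type*} [CommRing R] [AddCommGroup M] [Module R M]
    (S : Submonoid R)
    (hJ : ((⊥ : Ideal R).jacobson).map (algebraMap R (Localization S)) =
      (⊥ : Ideal (Localization S)).jacobson)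
    (N : Submodule R M) (hN : IsQuasiJSubmodule N)
    (hproper : N.localized S ≠ ⊤) :
    IsQuasiJSubmodule (N.localized S) := by
  set f := LocalizedModule.mkLinearMap S M
  refine ⟨hproper, fun x y hxy hx ↦ ?_⟩
  obtain ⟨r, s, rfl⟩ := IsLocalization.exists_mk'_eq S x
  obtain ⟨⟨m, t⟩, rfl⟩ := IsLocalizedModule.mk'_surjective S f y
  rw [Function.uncurry_apply_pair] at hxy ⊢
  rw [IsLocalizedModule.mk'_smul_mk'] at hxy
  obtain ⟨c, hc⟩ := exists_smul_mem_of_mk'_mem_localized' f hxy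
  have hcr : ((c : R) * r) • m ∈ N := by rwa [mul_smul, ← Submonoid.smul_def]
  have hcr' : (c : R) * r ∉ jacobsonColon R M := fun h ↦ hx <| by
    rw [IsLocalization.mk'_mem_iff,
      ← Ideal.unit_mul_mem_iff_mem _ (IsLocalization.map_units _ c), ← map_mul]
    exact map_jacobsonColon_le S f hJ (Ideal.mem_map_of_mem _ h)
  exact localized'_Mrad_le f N ⟨m, hN.2 _ _ hcr hcr', t, rfl⟩
end

section
/- Let N be a quasi-primary submodule of an R-module M such that (N : M) ⊆ J(R). Then N is a quasi J-submodule of M. -/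
open Submodule Pointwise

theorem Submodule.le_colon_smul_top {R M : Type*} [CommRing R] [AddCommGroup M] [Module R M]
    (I : Ideal R) : I ≤ (I • (⊤ : Submodule R M)).colon ⊤ :=
  fun _ hr => mem_colon.mpr fun _ _ => smul_mem_smul hr mem_top

theorem Ideal.radical_le_jacobson_of_le {R : Type*} [CommRing R] {I J : Ideal R}
    (hI : I ≤ J.jacobson) : I.radical ≤ J.jacobson :=
  J.isRadical_jacobson.radical_le_iff.mpr hI

theorem radical_colon_le_jacobsonColon {R M : Type*} [CommRing R] [AddCommGroup M] [Module R M]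
    {N : Submodule R M} (hJ : N.colon ⊤ ≤ (⊥ : Ideal R).jacobson) :
    (N.colon ⊤).radical ≤ jacobsonColon R M :=
  (Ideal.radical_le_jacobson_of_le hJ).trans (Submodule.le_colon_smul_top _)

theorem stmt8 {R M : Type*} [CommRing R] [AddCommGroup M] [Module R M]
    (N : Submodule R M) (hN : N ≠ ⊤)
    (hqp : ∀ (r : R) (m : M), r • m ∈ N → r ∈ (N.colon ⊤).radical ∨ m ∈ Mrad N)
    (hJ : N.colon ⊤ ≤ (⊥ : Ideal R).jacobson) :
    IsQuasiJSubmodule N :=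
  ⟨hN, fun r m hrm hr =>
    (hqp r m hrm).resolve_left fun hrad => hr (radical_colon_le_jacobsonColon hJ hrad)⟩
end

section
/- Let M be an R-module such that J(R) = (J(R)M : M) and J(R) is a quasi J-ideal of R. Let N, N₁, N₂, ..., N_k be submodules of M with N ⊆ N₁ ∪ N₂ ∪ ⋯ ∪ N_k. Suppose that N_j is a quasi J-submodule of M and that (Nᵢ : M) ⊄ J(R) for every i ≠ j. If N ⊄ ⋃_{i ≠ j} Nᵢ, then N ⊆ M-rad(N_j). -/
open Submodule Pointwise

/-- A `J`-ideal of a commutative ring. -/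
def IsJIdeal {R : Type*} [CommRing R] (I : Ideal R) : Prop :=
  I ≠ ⊤ ∧ ∀ a b : R, a * b ∈ I → a ∉ (⊥ : Ideal R).jacobson → b ∈ I

/-- A quasi `J`-ideal: a proper ideal whose radical is a `J`-ideal. -/
def IsQuasiJIdeal {R : Type*} [CommRing R] (I : Ideal R) : Prop :=
  I ≠ ⊤ ∧ IsJIdeal I.radical

section

open Ideal

variable {R : Type*} [CommRing R]

theorem IsJIdeal.mul_notMem {I : Ideal R} (hI : IsJIdeal I) {a b : R}
    (ha : a ∉ jacobson (⊥ : Ideal R)) (hb : b ∉ jacobson (⊥ : Ideal R)) : a * b ∉ I := by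
  intro hab
  have hbI : b * 1 ∈ I := by simpa using hI.2 a b hab ha
  exact hI.1 ((eq_top_iff_one I).mpr (hI.2 b 1 hbI hb))

theorem IsQuasiJIdeal.mul_notMem {I : Ideal R} (hI : IsQuasiJIdeal I) {a b : R}
    (ha : a ∉ jacobson (⊥ : Ideal R)) (hb : b ∉ jacobson (⊥ : Ideal R)) : a * b ∉ I :=
  fun hab => hI.2.mul_notMem ha hb (le_radical hab)

/-- When `J(R)` is a quasi `J`-ideal its complement is multiplicatively closed, so finitely many
ideals not contained in `J(R)` have a common element outside `J(R)`: the product of witnesses. -/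
theorem IsQuasiJIdeal.exists_notMem_jacobson_forall_mem {ι : Type*} [Fintype ι]
    (hJq : IsQuasiJIdeal (jacobson (⊥ : Ideal R))) (I : ι → Ideal R)
    (hI : ∀ i, ¬ I i ≤ jacobson ⊥) : ∃ r ∉ jacobson (⊥ : Ideal R), ∀ i, r ∈ I i := by
  classical
  choose a haI haJ using fun i => SetLike.not_le_iff_exists.mp (hI i)
  refine ⟨∏ i, a i, ?_, fun i => mem_of_dvd _ (Finset.dvd_prod_of_mem a (Finset.mem_univ i)) (haI i)⟩
  refine Finset.prod_induction a (· ∉ jacobson ⊥) (fun _ _ => hJq.mul_notMem) ?_ fun i _ => haJ i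
  exact (ne_top_iff_one _).mp hJq.1

/-- Prime-avoidance style step: a point `x ∈ N` outside `⋃_{i ≠ j} Nᵢ` lies in `N_j`, and so does
`r • n + x`, because `r` kills `M` modulo every `Nᵢ` with `i ≠ j`; subtracting gives `r • n ∈ N_j`. -/
theorem Submodule.smul_mem_of_subset_iUnion {M : Type*} [AddCommGroup M] [Module R M] {ι : Type*}
    {N : Submodule R M} {N' : ι → Submodule R M} {j : ι}
    (hsub : (N : Set M) ⊆ ⋃ i, (N' i : Set M))
    (hnot : ¬ (N : Set M) ⊆ ⋃ i, ⋃ (_ : i ≠ j), (N' i : Set M))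
    {r : R} (hr : ∀ i, i ≠ j → r ∈ (N' i).colon ⊤) {n : M} (hn : n ∈ N) : r • n ∈ N' j := by
  have hrn : ∀ i, i ≠ j → r • n ∈ N' i := fun i hi => mem_colon.mp (hr i hi) n trivial
  have mem_j : ∀ y ∈ N, (∀ i, i ≠ j → y ∉ N' i) → y ∈ N' j := by
    intro y hy hyj
    obtain ⟨i, hi⟩ := Set.mem_iUnion.mp (hsub hy)
    by_cases hij : i = j
    · exact hij ▸ hi
    · exact absurd hi (hyj i hij)
  obtain ⟨x, hxN, hxU⟩ := Set.not_subset.mp hnot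
  have hxi : ∀ i, i ≠ j → x ∉ N' i := fun i hi hx => hxU (Set.mem_biUnion hi hx)
  have hyj : r • n + x ∈ N' j := by
    refine mem_j _ (N.add_mem (N.smul_mem r hn) hxN) fun i hi hy => hxi i hi ?_
    simpa using (N' i).sub_mem hy (hrn i hi)
  simpa using (N' j).sub_mem hyj (mem_j x hxN hxi)

end

theorem stmt10 {R M : Type*} [CommRing R] [AddCommGroup M] [Module R M]
    (hJ : (⊥ : Ideal R).jacobson = jacobsonColon R M)
    (hJq : IsQuasiJIdeal ((⊥ : Ideal R).jacobson))
    {k : ℕ} (N : Submodule R M) (N' : Fin k → Submodule R M) (j : Fin k)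
    (hsub : (N : Set M) ⊆ ⋃ i, (N' i : Set M))
    (hj : IsQuasiJSubmodule (N' j))
    (hcolon : ∀ i, i ≠ j → ¬ (N' i).colon ⊤ ≤ (⊥ : Ideal R).jacobson)
    (hnot : ¬ (N : Set M) ⊆ ⋃ i, ⋃ (_ : i ≠ j), (N' i : Set M)) :
    N ≤ Mrad (N' j) := by
  obtain ⟨r, hrJ, hr⟩ := hJq.exists_notMem_jacobson_forall_mem
    (fun i : {i // i ≠ j} => (N' i).colon ⊤) fun i => hcolon i i.2
  intro n hn
  exact hj.2 r n (Submodule.smul_mem_of_subset_iUnion hsub hnot (fun i hi => hr ⟨i, hi⟩) hn) (hJ ▸ hrJ)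
end

section
/- Let N be a submodule of an R-module M with N ⊆ J(R)M. Then N is a quasi J-submodule of M if and only if M/N is a non-zero quasi J-presimplifiable R-module, and N is a J-submodule of M if and only if M/N is a non-zero J-presimplifiable R-module. -/
open Submodule Pointwise

/-- A `J`-submodule. -/
def IsJSubmodule {R M : Type*} [CommRing R] [AddCommGroup M] [Module R M]
    (N : Submodule R M) : Prop :=
  N ≠ ⊤ ∧ ∀ (r : R) (m : M), r • m ∈ N → r ∉ jacobsonColon R M → m ∈ N

/-- `Z(M)`: the set of zero divisors on `M`. -/
def Zdiv (R M : Type*) [CommRing R] [AddCommGroup M] [Module R M] : Set R :=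
  {r : R | ∃ m : M, m ≠ 0 ∧ r • m = 0}

/-- `NZ(M) = {r ∈ R : r m = 0 for some m ∉ Nil(M)}` where `Nil(M) = M`-rad(0). -/
def NZdiv (R M : Type*) [CommRing R] [AddCommGroup M] [Module R M] : Set R :=
  {r : R | ∃ m : M, m ∉ Mrad (⊥ : Submodule R M) ∧ r • m = 0}

/-- `M` is `J`-presimplifiable if `Z(M) ⊆ (J(R)M : M)`. -/
def IsJPresimplifiable (R M : Type*) [CommRing R] [AddCommGroup M] [Module R M] : Prop :=
  Zdiv R M ⊆ (jacobsonColon R M : Set R)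

/-- `M` is quasi `J`-presimplifiable if `NZ(M) ⊆ (J(R)M : M)`. -/
def IsQuasiJPresimplifiable (R M : Type*) [CommRing R] [AddCommGroup M] [Module R M] : Prop :=
  NZdiv R M ⊆ (jacobsonColon R M : Set R)

/-!
Everything transfers along `M → M ⧸ N`. Because `N ⊆ J(R)M`, the ideal `(J(R)M : M)` does not change
on passing to `M ⧸ N`, and prime submodules of `M ⧸ N` are exactly the images of the prime
submodules of `M` containing `N`, so `Nil(M ⧸ N)` pulls back to `M`-rad(N). Read in `M ⧸ N`, the
condition defining a (quasi) `J`-submodule is then the contrapositive of (quasi)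
`J`-presimplifiability.
-/

namespace Submodule

variable {R M M' : Type*} [CommRing R] [AddCommGroup M] [Module R M] [AddCommGroup M']
  [Module R M']

theorem colon_top_comap_of_surjective {f : M →ₗ[R] M'} (hf : Function.Surjective f)
    (Q : Submodule R M') : (Q.comap f).colon ⊤ = Q.colon ⊤ := by
  ext r
  simp only [mem_colon, Set.top_eq_univ, Set.mem_univ, true_imp_iff, mem_comap, map_smul,
    hf.forall]

theorem isPrimeSubmodule_comap_iff {f : M →ₗ[R] M'} (hf : Function.Surjective f)
    (Q : Submodule R M') : IsPrimeSubmodule (Q.comap f) ↔ IsPrimeSubmodule Q := by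
  have hproper : Q.comap f ≠ ⊤ ↔ Q ≠ ⊤ :=
    (comap_injective_of_surjective hf).ne_iff' (comap_top f)
  simp only [IsPrimeSubmodule, hproper, colon_top_comap_of_surjective hf, mem_comap, map_smul,
    hf.forall]

theorem comap_mkQ_map_mkQ_of_le {N P : Submodule R M} (hNP : N ≤ P) :
    (P.map N.mkQ).comap N.mkQ = P := by
  rw [comap_map_mkQ, sup_of_le_right hNP]

theorem comap_mkQ_mrad_bot (N : Submodule R M) :
    (Mrad (⊥ : Submodule R (M ⧸ N))).comap N.mkQ = Mrad N := by
  ext m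
  simp only [Mrad, mem_comap, mem_sInf, Set.mem_ofPred_eq, bot_le, and_true]
  constructor
  · rintro h P ⟨hP, hNP⟩
    rw [← comap_mkQ_map_mkQ_of_le hNP] at hP ⊢
    exact h _ ((isPrimeSubmodule_comap_iff N.mkQ_surjective _).mp hP)
  · intro h Q hQ
    refine h (Q.comap N.mkQ) ⟨(isPrimeSubmodule_comap_iff N.mkQ_surjective Q).mpr hQ, ?_⟩
    exact (ker_mkQ N).ge.trans (LinearMap.ker_le_comap _)

theorem colon_top_smul_top_quotient {N : Submodule R M} {I : Ideal R}
    (hNI : N ≤ I • (⊤ : Submodule R M)) :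
    (I • (⊤ : Submodule R (M ⧸ N))).colon ⊤ = (I • (⊤ : Submodule R M)).colon ⊤ := by
  rw [← range_mkQ N, ← map_top, ← map_smul'',
    ← colon_top_comap_of_surjective N.mkQ_surjective, comap_mkQ_map_mkQ_of_le hNI]

theorem smul_mem_imp_comap_mkQ_iff {N : Submodule R M} (P : Submodule R (M ⧸ N)) (I : Ideal R) :
    (∀ (r : R) (m : M), r • m ∈ N → r ∉ I → m ∈ P.comap N.mkQ) ↔
      {r : R | ∃ q : M ⧸ N, q ∉ P ∧ r • q = 0} ⊆ I := by
  constructor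
  · rintro h r ⟨q, hq, hrq⟩
    obtain ⟨m, rfl⟩ := N.mkQ_surjective q
    by_contra hr
    rw [← map_smul, mkQ_apply, Quotient.mk_eq_zero] at hrq
    exact hq (h r m hrq hr)
  · intro h r m hrm hr
    by_contra hm
    refine hr (h ⟨N.mkQ m, hm, ?_⟩)
    rwa [← map_smul, mkQ_apply, Quotient.mk_eq_zero]

end Submodule

theorem stmt11 {R M : Type*} [CommRing R] [AddCommGroup M] [Module R M]
    (N : Submodule R M) (hNJ : N ≤ (⊥ : Ideal R).jacobson • (⊤ : Submodule R M)) :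
    (IsQuasiJSubmodule N ↔
      (Nontrivial (M ⧸ N) ∧ IsQuasiJPresimplifiable R (M ⧸ N))) ∧
    (IsJSubmodule N ↔
      (Nontrivial (M ⧸ N) ∧ IsJPresimplifiable R (M ⧸ N))) := by
  have hJ : jacobsonColon R (M ⧸ N) = jacobsonColon R M := colon_top_smul_top_quotient hNJ
  rw [IsQuasiJSubmodule, IsJSubmodule, IsQuasiJPresimplifiable, IsJPresimplifiable,
    Quotient.nontrivial_iff, hJ]
  refine ⟨and_congr_right' ?_, and_congr_right' ?_⟩
  · rw [← comap_mkQ_mrad_bot, smul_mem_imp_comap_mkQ_iff]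
    rfl
  · have h := smul_mem_imp_comap_mkQ_iff (⊥ : Submodule R (M ⧸ N)) (jacobsonColon R M)
    rwa [comap_bot, ker_mkQ] at h
end

section
/- Let M be a J-presimplifiable R-module and let N be an r-submodule of M. Then N is a J-submodule of M (and in particular a quasi J-submodule of M). -/
open Submodule Pointwise

theorem le_mrad {R M : Type*} [CommRing R] [AddCommGroup M] [Module R M]
    (N : Submodule R M) : N ≤ Mrad N :=
  le_sInf fun _ hP => hP.2

theorem IsJSubmodule.isQuasiJSubmodule {R M : Type*} [CommRing R] [AddCommGroup M]
    [Module R M] {N : Submodule R M} (hN : IsJSubmodule N) : IsQuasiJSubmodule N :=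
  ⟨hN.1, fun r m hrm hr => le_mrad N (hN.2 r m hrm hr)⟩

theorem IsJPresimplifiable.eq_zero_of_smul_eq_zero {R M : Type*} [CommRing R]
    [AddCommGroup M] [Module R M] (hM : IsJPresimplifiable R M) {r : R}
    (hr : r ∉ jacobsonColon R M) {x : M} (hx : r • x = 0) : x = 0 := by
  by_contra hx0
  exact hr (hM ⟨x, hx0, hx⟩)

theorem stmt12 {R M : Type*} [CommRing R] [AddCommGroup M] [Module R M]
    (hM : IsJPresimplifiable R M) (N : Submodule R M) (hNproper : N ≠ ⊤)
    (hr : ∀ (a : R) (m : M), a • m ∈ N → (∀ x : M, a • x = 0 → x = 0) → m ∈ N) :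
    IsJSubmodule N ∧ IsQuasiJSubmodule N := by
  have hJ : IsJSubmodule N := ⟨hNproper, fun r m hrm hrJ =>
    hr r m hrm fun _ hx => hM.eq_zero_of_smul_eq_zero hrJ hx⟩
  exact ⟨hJ, hJ.isQuasiJSubmodule⟩
end

section
/- Let M be a finitely generated faithful multiplication R-module and I an ideal of R. Then I is a quasi J-ideal of R if and only if IM is a quasi J-submodule of M. -/
open Submodule Pointwise

/-!
A finitely generated faithful multiplication module `M` is a cancellation module:
`(AM : M) = A` for every ideal `A`. Nakayama's lemma gives `M ≠ 𝔪M` for a maximal ideal `𝔪`;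
an element `y ∉ 𝔪M` has `(Ry : M) ⊄ 𝔪`, so some `s ∉ 𝔪` maps `M` into `Ry`, and faithfulness
turns `s r y ∈ A y` into `s² r ∈ A`. Cancellation makes `pM` prime for every prime ideal `p`,
whence `M-rad(IM) = √I M` and `(J(R)M : M) = J(R)`; both sides of the equivalence then say
that `√I` is a `J`-ideal.
-/

section Colon

variable {R M : Type*} [CommRing R] [AddCommGroup M] [Module R M]

lemma smul_top_le_iff_le_colon {A : Ideal R} {N : Submodule R M} :
    A • (⊤ : Submodule R M) ≤ N ↔ A ≤ N.colon ⊤ :=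
  ⟨fun h _ ha => mem_colon.mpr fun _ _ => h (smul_mem_smul ha mem_top),
    fun h => smul_le.mpr fun _ ha x _ => mem_colon.mp (h ha) x (Set.mem_univ x)⟩

lemma IsPrimeSubmodule.isPrime_colon {P : Submodule R M} (hP : IsPrimeSubmodule P) :
    (P.colon ⊤).IsPrime where
  ne_top' h :=
    hP.1 (eq_top_iff.mpr fun x _ => (colon_eq_top_iff_subset _).mp h (Set.mem_univ x))
  mem_or_mem' {a b} hab := or_iff_not_imp_left.mpr fun ha => mem_colon.mpr fun x _ => by
    refine (hP.2 a (b • x) ?_).resolve_right ha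
    rw [smul_smul]
    exact mem_colon.mp hab x (Set.mem_univ x)

lemma radical_smul_top_le_mrad (I : Ideal R) :
    I.radical • (⊤ : Submodule R M) ≤ Mrad (I • ⊤) := by
  refine le_sInf fun P ⟨hP, hIP⟩ => smul_top_le_iff_le_colon.mpr ?_
  rw [Ideal.radical_eq_sInf]
  exact sInf_le ⟨smul_top_le_iff_le_colon.mp hIP, hP.isPrime_colon⟩

lemma mem_colon_colon_singleton_smul_top_of_smul_mem
    (hmult : ∀ N : Submodule R M, N = N.colon ⊤ • (⊤ : Submodule R M))
    {N : Submodule R M} {r : R} {m : M} (h : r • m ∈ N) :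
    m ∈ (N.colon ⊤).colon {r} • (⊤ : Submodule R M) := by
  have hm : m ∈ (span R {m}).colon ⊤ • (⊤ : Submodule R M) :=
    hmult (span R {m}) ▸ mem_span_singleton_self m
  refine smul_mono_left (fun c hc => mem_colon_singleton.mpr (mem_colon.mpr fun x _ => ?_)) hm
  obtain ⟨t, ht⟩ := mem_span_singleton.mp (mem_colon.mp hc x (Set.mem_univ x))
  rw [smul_eq_mul, mul_comm, mul_smul, ← ht, smul_comm]
  exact N.smul_mem t h

lemma exists_forall_smul_mem_span_singleton_of_notMem_smul_top
    (hmult : ∀ N : Submodule R M, N = N.colon ⊤ • (⊤ : Submodule R M))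
    {J : Ideal R} {y : M} (hy : y ∉ J • (⊤ : Submodule R M)) :
    ∃ s ∉ J, ∀ x : M, s • x ∈ span R {y} := by
  by_contra! h
  have hy' : y ∈ (span R {y}).colon ⊤ • (⊤ : Submodule R M) :=
    hmult (span R {y}) ▸ mem_span_singleton_self y
  refine hy (smul_mono_left (fun s hs => ?_) hy')
  by_contra hsJ
  obtain ⟨x, hx⟩ := h s hsJ
  exact hx (mem_colon.mp hs x (Set.mem_univ x))

lemma exists_mem_smul_eq_smul_of_forall_smul_mem_span_singleton {s : R} {y z : M}
    (hs : ∀ x : M, s • x ∈ span R {y}) {A : Ideal R} (hz : z ∈ A • (⊤ : Submodule R M)) :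
    ∃ a ∈ A, a • y = s • z := by
  refine mem_smul_span_singleton.mp (?_ : z ∈ (A • span R {y}).comap (s • LinearMap.id))
  refine smul_le.mpr (fun a ha x _ => ?_) hz
  rw [mem_comap, LinearMap.smul_apply, LinearMap.id_apply, smul_comm]
  exact smul_mem_smul ha (hs x)

end Colon

section Cancellation

variable {R M : Type*} [CommRing R] [AddCommGroup M] [Module R M]

lemma mul_eq_zero_of_forall_smul_mem_span_singleton
    (hfaithful : ∀ r : R, (∀ m : M, r • m = 0) → r = 0)
    {s t : R} {y : M} (hs : ∀ x : M, s • x ∈ span R {y}) (ht : t • y = 0) : t * s = 0 :=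
  hfaithful _ fun x => by
    obtain ⟨c, hc⟩ := mem_span_singleton.mp (hs x)
    rw [mul_smul, ← hc, smul_comm, ht, smul_zero]

variable [Module.Finite R M]

lemma smul_top_ne_top (hfaithful : ∀ r : R, (∀ m : M, r • m = 0) → r = 0)
    {J : Ideal R} (hJ : J ≠ ⊤) : J • (⊤ : Submodule R M) ≠ ⊤ := by
  intro h
  obtain ⟨c, hc1, hc0⟩ := exists_sub_one_mem_and_smul_eq_zero_of_fg_of_le_smul J ⊤
    Module.Finite.fg_top h.ge
  rw [hfaithful c fun x => hc0 x mem_top, zero_sub] at hc1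
  exact hJ (J.eq_top_of_isUnit_mem hc1 isUnit_one.neg)

variable (hfaithful : ∀ r : R, (∀ m : M, r • m = 0) → r = 0)
  (hmult : ∀ N : Submodule R M, N = N.colon ⊤ • (⊤ : Submodule R M))
include hfaithful hmult

theorem colon_smul_top_eq (A : Ideal R) : (A • (⊤ : Submodule R M)).colon ⊤ = A := by
  refine le_antisymm (fun r hr => ?_) (smul_top_le_iff_le_colon.mp le_rfl)
  by_contra hrA
  obtain ⟨P, hP, hAP⟩ := Ideal.exists_le_maximal (A.colon {r})
    (mt (colon_eq_top_iff_subset _).mp (by simpa using hrA))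
  obtain ⟨y, hy⟩ : ∃ y : M, y ∉ P • (⊤ : Submodule R M) := by
    by_contra! h
    exact smul_top_ne_top hfaithful hP.ne_top (eq_top_iff.mpr fun y _ => h y)
  obtain ⟨s, hsP, hs⟩ := exists_forall_smul_mem_span_singleton_of_notMem_smul_top hmult hy
  obtain ⟨a, ha, hsr⟩ :=
    exists_mem_smul_eq_smul_of_forall_smul_mem_span_singleton hs (mem_colon.mp hr y trivial)
  have hann : (s * r - a) * s = 0 :=
    mul_eq_zero_of_forall_smul_mem_span_singleton hfaithful hs
      (by rw [sub_smul, mul_smul, hsr, sub_self])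
  have hss : s * s ∈ A.colon {r} := by
    rw [mem_colon_singleton, smul_eq_mul, show s * s * r = a * s by linear_combination hann]
    exact A.mul_mem_right s ha
  exact hsP (hP.isPrime.mem_of_pow_mem 2 (sq s ▸ hAP hss))

lemma mem_colon_singleton_smul_top_of_smul_mem {A : Ideal R} {r : R} {m : M}
    (h : r • m ∈ A • (⊤ : Submodule R M)) : m ∈ A.colon {r} • (⊤ : Submodule R M) := by
  simpa only [colon_smul_top_eq hfaithful hmult] using
    mem_colon_colon_singleton_smul_top_of_smul_mem hmult h

lemma isPrimeSubmodule_smul_top {p : Ideal R} (hp : p.IsPrime) :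
    IsPrimeSubmodule (p • (⊤ : Submodule R M)) := by
  refine ⟨smul_top_ne_top hfaithful hp.ne_top, fun r m h => ?_⟩
  rw [colon_smul_top_eq hfaithful hmult]
  refine or_iff_not_imp_right.mpr fun hr => smul_mono_left (fun c hc => ?_)
    (mem_colon_singleton_smul_top_of_smul_mem hfaithful hmult h)
  exact (hp.mem_or_mem (mem_colon_singleton.mp hc)).resolve_right hr

lemma mrad_smul_top_eq (I : Ideal R) :
    Mrad (I • (⊤ : Submodule R M)) = I.radical • (⊤ : Submodule R M) := by
  refine le_antisymm ?_ (radical_smul_top_le_mrad I)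
  rw [hmult (Mrad _)]
  refine smul_mono_left ?_
  rw [Ideal.radical_eq_sInf]
  refine le_sInf fun p ⟨hIp, hp⟩ => ?_
  calc (Mrad (I • ⊤)).colon ⊤ ≤ (p • (⊤ : Submodule R M)).colon ⊤ :=
        colon_mono (sInf_le ⟨isPrimeSubmodule_smul_top hfaithful hmult hp, smul_mono_left hIp⟩)
          subset_rfl
    _ = p := colon_smul_top_eq hfaithful hmult p

end Cancellation

theorem stmt13 {R M : Type*} [CommRing R] [AddCommGroup M] [Module R M]
    [Module.Finite R M]
    (hfaithful : ∀ r : R, (∀ m : M, r • m = 0) → r = 0)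
    (hmult : ∀ N : Submodule R M, N = N.colon ⊤ • (⊤ : Submodule R M))
    (I : Ideal R) :
    IsQuasiJIdeal I ↔ IsQuasiJSubmodule (I • (⊤ : Submodule R M)) := by
  have hcancel := colon_smul_top_eq hfaithful hmult
  have hI : I • (⊤ : Submodule R M) ≠ ⊤ ↔ I ≠ ⊤ :=
    ⟨fun h hI => h (hI ▸ top_smul _), smul_top_ne_top hfaithful⟩
  unfold IsQuasiJIdeal IsQuasiJSubmodule IsJIdeal
  rw [hI, jacobsonColon, hcancel, mrad_smul_top_eq hfaithful hmult]
  refine and_congr_right fun hIne => ⟨fun ⟨_, hJ⟩ r m hrm hr => ?_, fun hq => ?_⟩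
  · refine smul_mono_left (fun c hc => ?_)
      (mem_colon_singleton_smul_top_of_smul_mem hfaithful hmult hrm)
    exact hJ r c (Ideal.le_radical (mul_comm c r ▸ mem_colon_singleton.mp hc)) hr
  · refine ⟨mt Ideal.radical_eq_top.mp hIne, fun a b ⟨n, hn⟩ ha => ?_⟩
    have hbn : b ^ n ∈ I.radical := by
      rw [← hcancel I.radical]
      refine mem_colon.mpr fun x _ =>
        hq (a ^ n) _ ?_ fun h => ha (Ideal.isRadical_jacobson ⊥ ⟨n, h⟩)
      rw [smul_smul, ← mul_pow]
      exact smul_mem_smul hn mem_top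
    exact Ideal.radical_idem I ▸ ⟨n, hbn⟩
end

section
/- Let M be a finitely generated faithful multiplication R-module. If I is a quasi J-ideal of R and N is a quasi J-submodule of M, then IN is a quasi J-submodule of M. -/
open Submodule Pointwise

/-
The key tool is the determinant trick: in a finitely generated faithful module,
`a • M ⊆ K • M` forces `a ∈ √K`. Let `r • m ∈ I • N` with `r ∉ (J(R)M : M)`. Then `r` times
every element of `(Rm : M)` lies in `√I`, and since `√I` is a `J`-ideal, `(Rm : M) ⊆ √I`; as
`M` is a multiplication module, `m ∈ √I • M`. Now let `P ⊇ I • N` be a prime submodule. Either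
`I ⊆ (P : M)`, and then `m ∈ √I • M ⊆ (P : M) • M ⊆ P`; or `N ⊆ P`, and then
`m ∈ M-rad(N) ⊆ P` because `N` is a quasi `J`-submodule and `r • m ∈ N`.
-/

open Polynomial

lemma Polynomial.Monic.pow_natDegree_mem_of_eval_eq_zero {R : Type*} [CommRing R]
    {K : Ideal R} {p : R[X]} (hp : p.Monic) (hcoeff : ∀ k < p.natDegree, p.coeff k ∈ K)
    {a : R} (ha : p.eval a = 0) : a ^ p.natDegree ∈ K := by
  have hsplit :
      p.eval a = a ^ p.natDegree + ∑ k ∈ Finset.range p.natDegree, p.coeff k * a ^ k := by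
    rw [eval_eq_sum_range, Finset.sum_range_succ, hp.coeff_natDegree, one_mul, add_comm]
  rw [ha, eq_comm, add_eq_zero_iff_eq_neg] at hsplit
  rw [hsplit]
  exact K.neg_mem <| K.sum_mem fun k hk => K.mul_mem_right _ (hcoeff k (Finset.mem_range.mp hk))

lemma Ideal.mem_radical_of_forall_smul_mem_smul_top {R M : Type*} [CommRing R]
    [AddCommGroup M] [Module R M] [Module.Finite R M] [FaithfulSMul R M]
    {K : Ideal R} {a : R} (h : ∀ m : M, a • m ∈ K • (⊤ : Submodule R M)) :
    a ∈ K.radical := by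
  obtain ⟨p, hp, -, hcoeff, hpa⟩ :=
    LinearMap.exists_monic_and_natDegree_eq_and_coeff_mem_pow_and_aeval_eq_zero R
      (algebraMap R (Module.End R M) a) K (by
        rintro _ ⟨m, rfl⟩
        simpa [Module.algebraMap_end_apply] using h m)
  rw [aeval_algebraMap_apply_eq_algebraMap_eval] at hpa
  have hpa' : p.eval a = 0 := by
    rw [← Submodule.mem_bot R, ← Module.annihilator_eq_bot.mpr ‹_›, Module.mem_annihilator]
    intro m
    simpa [Module.algebraMap_end_apply] using LinearMap.congr_fun hpa m
  refine ⟨p.natDegree, hp.pow_natDegree_mem_of_eval_eq_zero (fun k hk => ?_) hpa'⟩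
  exact Ideal.pow_le_self (Nat.sub_ne_zero_of_lt hk) (hcoeff k)

section PrimeSubmodule

variable {R M : Type*} [CommRing R] [AddCommGroup M] [Module R M] {P : Submodule R M}

lemma IsPrimeSubmodule.colon_isPrime (hP : IsPrimeSubmodule P) : (P.colon ⊤).IsPrime := by
  refine ⟨fun h => hP.1 (eq_top_iff.mpr fun x _ => ?_), fun {a b} hab => ?_⟩
  · simpa using mem_colon.mp (h ▸ Submodule.mem_top : (1 : R) ∈ P.colon ⊤) x trivial
  · refine or_iff_not_imp_left.mpr fun ha => mem_colon.mpr fun x _ => ?_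
    have habx : a • b • x ∈ P := mul_smul a b x ▸ mem_colon.mp hab x trivial
    exact (hP.2 a (b • x) habx).resolve_right ha

lemma IsPrimeSubmodule.le_colon_or_le_of_smul_le (hP : IsPrimeSubmodule P) {I : Ideal R}
    {N : Submodule R M} (h : I • N ≤ P) : I ≤ P.colon ⊤ ∨ N ≤ P := by
  refine or_iff_not_imp_left.mpr fun hI n hn => ?_
  obtain ⟨i, hi, hiP⟩ := Set.not_subset.mp hI
  exact (hP.2 i n (h (smul_mem_smul hi hn))).resolve_right hiP

lemma IsPrimeSubmodule.radical_smul_top_le (hP : IsPrimeSubmodule P) {I : Ideal R}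
    (hI : I ≤ P.colon ⊤) : I.radical • (⊤ : Submodule R M) ≤ P :=
  smul_le.mpr fun _ ha x _ =>
    mem_colon.mp (hP.colon_isPrime.radical_le_iff.mpr hI ha) x trivial

lemma Mrad_le_of_le (hP : IsPrimeSubmodule P) {N : Submodule R M} (hNP : N ≤ P) :
    Mrad N ≤ P :=
  sInf_le ⟨hP, hNP⟩

end PrimeSubmodule

lemma colon_span_singleton_le_radical {R M : Type*} [CommRing R] [AddCommGroup M]
    [Module R M] [Module.Finite R M] [FaithfulSMul R M] {I : Ideal R} (hI : IsJIdeal I.radical)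
    {r : R} (hr : r ∉ (⊥ : Ideal R).jacobson) {m : M}
    (hrm : r • m ∈ I • (⊤ : Submodule R M)) :
    (span R {m}).colon ⊤ ≤ I.radical := by
  refine fun b hb =>
    hI.2 r b (Ideal.mem_radical_of_forall_smul_mem_smul_top (M := M) fun x => ?_) hr
  obtain ⟨c, hc⟩ := mem_span_singleton.mp (mem_colon.mp hb x trivial)
  rw [mul_smul, ← hc, smul_comm]
  exact Submodule.smul_mem _ c hrm

theorem stmt15 {R M : Type*} [CommRing R] [AddCommGroup M] [Module R M]
    [Module.Finite R M]
    (hfaithful : ∀ r : R, (∀ m : M, r • m = 0) → r = 0)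
    (hmult : ∀ N : Submodule R M, N = N.colon ⊤ • (⊤ : Submodule R M))
    (I : Ideal R) (hI : IsQuasiJIdeal I)
    (N : Submodule R M) (hN : IsQuasiJSubmodule N) :
    IsQuasiJSubmodule (I • N) := by
  have : FaithfulSMul R M := Module.annihilator_eq_bot.mp <|
    eq_bot_iff.mpr fun r hr => hfaithful r (Module.mem_annihilator.mp hr)
  refine ⟨ne_top_of_le_ne_top hN.1 smul_le_right, fun r m hrm hr => ?_⟩
  have hrJ : r ∉ (⊥ : Ideal R).jacobson := fun h =>
    hr (mem_colon.mpr fun x _ => smul_mem_smul h trivial)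
  have hm : m ∈ I.radical • (⊤ : Submodule R M) := by
    refine smul_mono_left (colon_span_singleton_le_radical hI.2 hrJ ?_) <|
      (hmult (span R {m})).le (mem_span_singleton_self m)
    exact smul_mono_right I (le_top : N ≤ ⊤) hrm
  refine mem_sInf.mpr fun P ⟨hP, hINP⟩ => ?_
  rcases hP.le_colon_or_le_of_smul_le hINP with hIP | hNP
  · exact hP.radical_smul_top_le hIP hm
  · exact Mrad_le_of_le hP hNP (hN.2 r m (smul_le_right hrm) hr)
end

section
/- Let M be a faithful multiplication R-module, N a submodule of M, and I a finitely generated faithful multiplication ideal of R. If IN is a J-submodule of M, then either I is a J-ideal of R or N is a J-submodule of M. -/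
open Submodule Pointwise

/-! `I • N` being a proper `J`-submodule forces `M` to be finitely generated: for `y ∉ I • N`
pick `h` in the trace ideal `∑ₓ (Rx : M)` with `h • y = y`; then `1 - h ∈ (J(R)M : M)`, which in
a multiplication module means `(1 - h) • x ∈ J(R) • x` for every `x`, so every `x` lies in
`h • M`, inside a finitely generated submodule. A finitely generated faithful multiplication
module (`M`, and `I` as an ideal) is locally cyclic at every maximal ideal, hence cancellative:
`A • P ≤ B • P → A ≤ B`. For `N = ⊤` this gives `(A M : M) = A`, turning the `J`-property of
`I • M` into that of `I`; otherwise cancelling `M` and then `I` gives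
`I • K ≤ I • L → K ≤ L`, turning the `J`-property of `I • N` into that of `N`. -/

namespace Submodule

variable {R M : Type*} [CommRing R] [AddCommGroup M] [Module R M]

def IsMultiplication (P : Submodule R M) : Prop :=
  ∀ K ≤ P, K = K.colon P • P

theorem smul_colon_le (K P : Submodule R M) : K.colon P • P ≤ K :=
  smul_le.mpr fun _ hr _ hn => mem_colon.mp hr _ hn

theorem IsMultiplication.of_exists_eq_smul {P : Submodule R M}
    (h : ∀ K ≤ P, ∃ C : Ideal R, K = C • P) : P.IsMultiplication := by
  intro K hK
  obtain ⟨C, hC⟩ := h K hK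
  refine le_antisymm ?_ (smul_colon_le K P)
  conv_lhs => rw [hC]
  exact smul_mono_left fun c hc => mem_colon.mpr fun y hy => hC ▸ smul_mem_smul hc hy

theorem ideal_smul_smul_comm (A B : Ideal R) (N : Submodule R M) : A • B • N = B • A • N := by
  rw [← smul_assoc, ← smul_assoc, Ideal.smul_eq_mul, Ideal.smul_eq_mul, mul_comm]

variable {P : Submodule R M}

theorem IsMultiplication.exists_sub_smul_mem_span_singleton (hP : P.IsMultiplication)
    (hfg : P.FG) (hann : P.annihilator = ⊥) (m : Ideal R) [hm : m.IsMaximal] :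
    ∃ z ∈ P, ∃ q ∈ m, ∀ y ∈ P, (1 - q) • y ∈ R ∙ z := by
  by_cases h : ∃ z ∈ P, ¬ (R ∙ z).colon P ≤ m
  · obtain ⟨z, hz, hzm⟩ := h
    obtain ⟨c, hc, hcm⟩ := SetLike.not_le_iff_exists.mp hzm
    obtain ⟨u, q, hq, huq⟩ := hm.exists_inv hcm
    refine ⟨z, hz, q, hq, fun y hy => ?_⟩
    rw [show 1 - q = u * c by rw [← huq]; ring, mul_smul]
    exact smul_mem _ u (mem_colon.mp hc y hy)
  · push Not at h
    have hle : P ≤ m • P := fun z hz => by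
      have hzP : R ∙ z ≤ P := (span_singleton_le_iff_mem z P).mpr hz
      exact smul_mono_left (h z hz) ((hP _ hzP).le (mem_span_singleton_self z))
    obtain ⟨r, hr1, hr0⟩ := exists_sub_one_mem_and_smul_eq_zero_of_fg_of_le_smul m P hfg hle
    have hr : r = 0 := by simpa [hann] using mem_annihilator.mpr hr0
    exact (hm.ne_top ((Ideal.eq_top_iff_one m).mpr (by simpa [hr] using m.neg_mem hr1))).elim

theorem IsMultiplication.colon_smul_le (hP : P.IsMultiplication) (hfg : P.FG)
    (hann : P.annihilator = ⊥) (A : Ideal R) : (A • P).colon P ≤ A := by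
  intro a ha
  by_contra haA
  obtain ⟨m, hm, hAm⟩ := Ideal.exists_le_maximal (A.colon {a}) (by simpa using haA)
  obtain ⟨z, hzP, q, hq, hz⟩ := hP.exists_sub_smul_mem_span_singleton hfg hann m
  have hloc : ∀ w ∈ A • P, (1 - q) • w ∈ A • (R ∙ z) := fun w hw =>
    smul_induction_on hw (fun r hr y hy => by rw [smul_comm]; exact smul_mem_smul hr (hz y hy))
      fun _ _ h₁ h₂ => by rw [smul_add]; exact add_mem h₁ h₂
  obtain ⟨g, hgA, hg⟩ := mem_smul_span_singleton.mp (hloc _ (mem_colon.mp ha z hzP))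
  -- `(1 - q) • P` is cyclic on `z`, so killing `z` means killing `(1 - q) • P`
  have hkill : ((1 - q) * a - g) * (1 - q) = 0 := by
    rw [← mem_bot R, ← hann, mem_annihilator]
    intro y hy
    obtain ⟨s, hs⟩ := mem_span_singleton.mp (hz y hy)
    rw [mul_smul, ← hs, smul_comm, sub_smul, mul_smul, hg, sub_self, smul_zero]
  have hsq : (1 - q) * (1 - q) ∈ A.colon {a} := by
    rw [mem_colon_singleton, smul_eq_mul,
      show (1 - q) * (1 - q) * a = (1 - q) * g by linear_combination hkill]
    exact A.mul_mem_left _ hgA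
  have h1q : 1 - q ∈ m := (hm.isPrime.mem_or_mem (hAm hsq)).elim id id
  exact hm.ne_top ((Ideal.eq_top_iff_one m).mpr (by simpa using m.add_mem hq h1q))

theorem IsMultiplication.le_of_smul_le_smul (hP : P.IsMultiplication) (hfg : P.FG)
    (hann : P.annihilator = ⊥) {A B : Ideal R} (h : A • P ≤ B • P) : A ≤ B :=
  fun _ ha => hP.colon_smul_le hfg hann B (mem_colon.mpr fun _ hy => h (smul_mem_smul ha hy))

theorem IsMultiplication.exists_smul_eq_of_mem_colon_smul (hP : P.IsMultiplication)
    {A : Ideal R} {c : R} (hc : c ∈ (A • P).colon P) {x : M} (hx : x ∈ P) :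
    ∃ a ∈ A, a • x = c • x := by
  have hxP := hP _ ((span_singleton_le_iff_mem x P).mpr hx)
  have hcx : c • x ∈ (R ∙ x).colon P • A • P := by
    refine smul_induction_on (p := fun y => c • y ∈ (R ∙ x).colon P • A • P)
      (hxP.le (mem_span_singleton_self x)) (fun r hr y hy => ?_) fun _ _ h₁ h₂ => ?_
    · rw [smul_comm c r y]; exact smul_mem_smul hr (mem_colon.mp hc y hy)
    · rw [smul_add]; exact add_mem h₁ h₂
  rw [ideal_smul_smul_comm, ← hxP] at hcx
  exact mem_smul_span_singleton.mp hcx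

theorem IsMultiplication.fg_top_of_isJSubmodule (hM : (⊤ : Submodule R M).IsMultiplication)
    {N : Submodule R M} (hN : IsJSubmodule N) : (⊤ : Submodule R M).FG := by
  set θ : Ideal R := ⨆ x : M, (R ∙ x).colon (⊤ : Submodule R M)
  have hθ : θ • (⊤ : Submodule R M) = ⊤ := eq_top_iff.mpr fun x _ =>
    smul_mono_left (le_iSup _ x) ((hM _ le_top).le (mem_span_singleton_self x))
  obtain ⟨y, hyN⟩ : ∃ y, y ∉ N := by simpa [eq_top_iff'] using hN.1
  obtain ⟨h, hθh, hy⟩ : ∃ h ∈ θ, h • y = y := by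
    have hy : y ∈ θ • (R ∙ y) := by
      rw [hM (R ∙ y) le_top, ideal_smul_smul_comm, hθ, ← hM (R ∙ y) le_top]
      exact mem_span_singleton_self y
    exact mem_smul_span_singleton.mp hy
  have h1h : 1 - h ∈ jacobsonColon R M := by
    by_contra hJ
    exact hyN (hN.2 (1 - h) y (by rw [sub_smul, one_smul, hy, sub_self]; exact zero_mem N) hJ)
  obtain ⟨s, hs⟩ := mem_iSup_iff_exists_finset.mp hθh
  have hhs : h ∈ (span R (s : Set M)).colon (⊤ : Submodule R M) :=
    iSup₂_le (fun z hz => colon_mono (span_mono (by simpa using hz)) subset_rfl) hs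
  refine ⟨s, eq_top_iff.mpr fun x _ => ?_⟩
  obtain ⟨j, hj, hjx⟩ := hM.exists_smul_eq_of_mem_colon_smul h1h (mem_top (x := x))
  have hunit : IsUnit (1 - j) :=
    Ideal.isUnit_of_sub_one_mem_jacobson_bot _ (by simpa using neg_mem hj)
  rw [← smul_mem_iff_of_isUnit _ hunit, sub_smul, hjx, one_smul, sub_smul, one_smul,
    sub_sub_cancel]
  exact mem_colon.mp hhs x mem_top

theorem IsMultiplication.le_of_ideal_smul_le_smul (hM : (⊤ : Submodule R M).IsMultiplication)
    (hMcancel : ∀ A B : Ideal R, A • (⊤ : Submodule R M) ≤ B • ⊤ → A ≤ B) {I : Ideal R}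
    (hIcancel : ∀ A B : Ideal R, A • I ≤ B • I → A ≤ B) {K L : Submodule R M}
    (h : I • K ≤ I • L) : K ≤ L := by
  rw [hM K le_top, hM L le_top] at h ⊢
  refine smul_mono_left (hIcancel _ _ ?_)
  rw [Ideal.smul_eq_mul, Ideal.smul_eq_mul, mul_comm, mul_comm (L.colon _)]
  refine hMcancel _ _ ?_
  simpa only [← Ideal.smul_eq_mul, smul_assoc] using h

end Submodule

section

variable {R M : Type*} [CommRing R] [AddCommGroup M] [Module R M]

theorem isJIdeal_of_isJSubmodule_smul_top
    (hcolon : ∀ A : Ideal R, (A • ⊤ : Submodule R M).colon ⊤ ≤ A) {I : Ideal R}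
    (hI : IsJSubmodule (I • ⊤ : Submodule R M)) : IsJIdeal I := by
  refine ⟨fun hItop => hI.1 (by rw [hItop, top_smul]), fun a b hab ha => ?_⟩
  have ha' : a ∉ jacobsonColon R M := fun h => ha (hcolon _ h)
  refine hcolon I (mem_colon.mpr fun x _ => hI.2 a (b • x) ?_ ha')
  rw [← mul_smul]
  exact smul_mem_smul hab mem_top

theorem IsJSubmodule.of_ideal_smul {I : Ideal R}
    (hcancel : ∀ K L : Submodule R M, I • K ≤ I • L → K ≤ L) {N : Submodule R M} (hN : N ≠ ⊤)
    (h : IsJSubmodule (I • N)) : IsJSubmodule N := by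
  refine ⟨hN, fun r x hrx hr => ?_⟩
  have hIx : I • (R ∙ x) ≤ I • N := smul_le.mpr fun i hi y hy => by
    obtain ⟨t, rfl⟩ := mem_span_singleton.mp hy
    rw [smul_comm i t x]
    refine smul_mem _ t (h.2 r (i • x) ?_ hr)
    rw [smul_comm r i x]
    exact smul_mem_smul hi hrx
  exact hcancel _ _ hIx (mem_span_singleton_self x)

end

theorem stmt16 {R M : Type*} [CommRing R] [AddCommGroup M] [Module R M]
    (hfaithful : ∀ r : R, (∀ m : M, r • m = 0) → r = 0)
    (hmult : ∀ N : Submodule R M, N = N.colon ⊤ • (⊤ : Submodule R M))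
    (I : Ideal R) (hIfg : I.FG)
    (hIfaithful : ∀ r : R, (∀ a ∈ I, r * a = 0) → r = 0)
    (hImult : ∀ J : Ideal R, J ≤ I → ∃ C : Ideal R, J = C * I)
    (N : Submodule R M) (hIN : IsJSubmodule (I • N)) :
    IsJIdeal I ∨ IsJSubmodule N := by
  have hM : (⊤ : Submodule R M).IsMultiplication := fun K _ => hmult K
  have hMann : (⊤ : Submodule R M).annihilator = ⊥ := eq_bot_iff.mpr fun r hr =>
    hfaithful r fun m => mem_annihilator.mp hr m mem_top
  have hI : I.IsMultiplication := IsMultiplication.of_exists_eq_smul fun K hK =>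
    (hImult K hK).imp fun C hC => hC.trans (Ideal.smul_eq_mul C I).symm
  have hIann : I.annihilator = ⊥ := eq_bot_iff.mpr fun r hr =>
    hIfaithful r fun a ha => mem_annihilator.mp hr a ha
  have hMfg := hM.fg_top_of_isJSubmodule hIN
  by_cases hN : N = ⊤
  · subst hN
    exact Or.inl (isJIdeal_of_isJSubmodule_smul_top (hM.colon_smul_le hMfg hMann) hIN)
  · refine Or.inr (hIN.of_ideal_smul (fun _ _ => hM.le_of_ideal_smul_le_smul ?_ ?_) hN)
    · exact fun _ _ => hM.le_of_smul_le_smul hMfg hMann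
    · exact fun _ _ => hI.le_of_smul_le_smul hIfg hIann
end

section
/- Let R be a commutative ring, M an R-module, and let R(+)M denote the idealization of M, with multiplication (r₁, m₁)(r₂, m₂) = (r₁r₂, r₁m₂ + r₂m₁). Let I be an ideal of R and N a submodule of M with IM ⊆ N, so that I(+)N is an ideal of R(+)M. Then I(+)N is a quasi J-ideal of R(+)M if and only if I is a quasi J-ideal of R. -/
/-!
The projection `fst : R(+)M → R` is a surjective ring map, and an element of `R(+)M` is a unit
iff its first coordinate is, so `J(R(+)M)` is the preimage of `J(R)`; hence J-ideals of `R`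
correspond to their preimages. Since `(a, m)^(n+1) = (a^(n+1), (n+1) a^n m)` and `IM ⊆ N`, the
radical of `I(+)N` is the preimage of `√I`; as being a quasi J-ideal only depends on the radical,
the theorem follows.
-/

theorem isQuasiJIdeal_iff_isJIdeal_radical {R : Type*} [CommRing R] (I : Ideal R) :
    IsQuasiJIdeal I ↔ IsJIdeal I.radical :=
  ⟨And.right, fun h => ⟨fun hI => h.1 (Ideal.radical_eq_top.2 hI), h⟩⟩

theorem isJIdeal_comap_iff {S R F : Type*} [CommRing S] [CommRing R] [FunLike F S R]
    [RingHomClass F S R] {f : F} (hf : Function.Surjective f)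
    (hJ : (⊥ : Ideal R).jacobson.comap f = (⊥ : Ideal S).jacobson) (I : Ideal R) :
    IsJIdeal (I.comap f) ↔ IsJIdeal I := by
  have mem_jacobson (x : S) : x ∈ (⊥ : Ideal S).jacobson ↔ f x ∈ (⊥ : Ideal R).jacobson := by
    rw [← hJ, Ideal.mem_comap]
  have comap_ne_top : I.comap f ≠ ⊤ ↔ I ≠ ⊤ :=
    ⟨fun h hI => h (hI ▸ Ideal.comap_top), Ideal.comap_ne_top f⟩
  refine ⟨fun ⟨hne, hK⟩ => ⟨comap_ne_top.1 hne, fun a b hab ha => ?_⟩,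
    fun ⟨hne, hI⟩ => ⟨comap_ne_top.2 hne, fun a b hab ha => ?_⟩⟩
  · obtain ⟨a, rfl⟩ := hf a
    obtain ⟨b, rfl⟩ := hf b
    exact hK a b (by rwa [Ideal.mem_comap, map_mul]) (by rwa [mem_jacobson])
  · exact hI (f a) (f b) (by rwa [Ideal.mem_comap, map_mul] at hab) (by rwa [mem_jacobson] at ha)

namespace TrivSqZeroExt

variable {R M : Type*} [CommRing R] [AddCommGroup M] [Module R M] [Module Rᵐᵒᵖ M]
  [IsCentralScalar R M]

theorem fstHom_surjective : Function.Surjective (fstHom R R M) :=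
  fun r => ⟨inl r, fst_inl M r⟩

theorem comap_fstHom_jacobson_bot :
    (⊥ : Ideal R).jacobson.comap (fstHom R R M) = (⊥ : Ideal (TrivSqZeroExt R M)).jacobson := by
  ext x
  simp only [Ideal.mem_comap, Ideal.mem_jacobson_bot, isUnit_iff_isUnit_fst, fst_add, fst_mul,
    fst_one]
  exact ⟨fun h y => h y.fst, fun h r => by simpa using h (inl r)⟩

theorem radical_eq_comap_fstHom {I : Ideal R} {N : Submodule R M}
    (hIN : ∀ a ∈ I, ∀ m : M, a • m ∈ N) {K : Ideal (TrivSqZeroExt R M)}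
    (hK : ∀ x : TrivSqZeroExt R M, x ∈ K ↔ x.fst ∈ I ∧ x.snd ∈ N) :
    K.radical = I.radical.comap (fstHom R R M) := by
  ext x
  refine ⟨fun ⟨n, hn⟩ => ⟨n, ((hK _).1 hn).1⟩, fun ⟨n, hn⟩ => ⟨n + 1, (hK _).2 ⟨?_, ?_⟩⟩⟩
  · rw [fst_pow, pow_succ]
    exact I.mul_mem_right _ hn
  · rw [snd_pow, Nat.pred_succ]
    exact nsmul_mem (hIN _ hn _) _

end TrivSqZeroExt

theorem stmt19 {R M : Type*} [CommRing R] [AddCommGroup M] [Module R M]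
    [Module Rᵐᵒᵖ M] [IsCentralScalar R M]
    (I : Ideal R) (N : Submodule R M)
    (hIN : ∀ a ∈ I, ∀ m : M, a • m ∈ N)
    (K : Ideal (TrivSqZeroExt R M))
    (hK : ∀ x : TrivSqZeroExt R M, x ∈ K ↔ x.fst ∈ I ∧ x.snd ∈ N) :
    IsQuasiJIdeal K ↔ IsQuasiJIdeal I := by
  rw [isQuasiJIdeal_iff_isJIdeal_radical, isQuasiJIdeal_iff_isJIdeal_radical,
    TrivSqZeroExt.radical_eq_comap_fstHom hIN hK]
  exact isJIdeal_comap_iff TrivSqZeroExt.fstHom_surjective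
    TrivSqZeroExt.comap_fstHom_jacobson_bot I.radical
end
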